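/- arXiv:1302.5871 — 3 statements merged into one kernel-verified Lean document; each statement's English description precedes it below -/
import Mathlib

section
/- Approximate optimality from approximate complementary slackness: let f be a feasible flow and (α, β) a feasible dual for the budgeted transportation LP with 0 ≤ ε. Suppose (i) for every edge ij with f_{ij} > 0 we have α_i ≤ c_{ij} − p_{ij} β_j + ε c_{ij}, (ii) for every source i with ∑_j f_{ij} < a_i we have α_i = 0, and (iii) for every sink j with ∑_i p_{ij} f_{ij} < b_j we have β_j = 0. Then ∑_{ij} c_{ij} f_{ij} ≥ (1 − ε)·OPT, where OPT is the value of any feasible flow g (i.e. ∑_{ij} c_{ij} f_{ij} ≥ (1−ε) ∑_{ij} c_{ij} g_{ij}). -/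
/-!
Weak duality bounds the cost of any feasible flow `g` by the dual objective
`∑ αᵢ aᵢ + ∑ βⱼ bⱼ`. Complementary slackness on the vertices turns the dual objective into
`∑ᵢⱼ (αᵢ + pᵢⱼ βⱼ) fᵢⱼ`, and slackness on the edges bounds each term by `(1 + ε) cᵢⱼ fᵢⱼ`.
Hence `G ≤ (1 + ε) F`, and `(1 - ε) G ≤ (1 - ε²) F ≤ F`.
-/

open Finset

namespace BudgetedTransportation

variable {S T : Type*} [Fintype S] [Fintype T]

theorem sum_dual_mul_loads (p x : S → T → ℝ) (α : S → ℝ) (β : T → ℝ) :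
    ∑ i, α i * ∑ j, x i j + ∑ j, β j * ∑ i, p i j * x i j =
      ∑ i, ∑ j, (α i + p i j * β j) * x i j := by
  simp only [add_mul, sum_add_distrib, mul_sum]
  rw [sum_comm (f := fun j i => β j * (p i j * x i j))]
  congr 1
  exact sum_congr rfl fun i _ => sum_congr rfl fun j _ => by ring

theorem cost_le_dual_objective (a : S → ℝ) (b : T → ℝ) (p c g : S → T → ℝ)
    (α : S → ℝ) (β : T → ℝ)
    (hg : ∀ i j, 0 ≤ g i j)
    (hgcap : ∀ i, ∑ j, g i j ≤ a i)
    (hgbud : ∀ j, ∑ i, p i j * g i j ≤ b j)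
    (hα : ∀ i, 0 ≤ α i) (hβ : ∀ j, 0 ≤ β j)
    (hdual : ∀ i j, c i j - p i j * β j ≤ α i) :
    ∑ i, ∑ j, c i j * g i j ≤ ∑ i, α i * a i + ∑ j, β j * b j :=
  calc ∑ i, ∑ j, c i j * g i j
      ≤ ∑ i, ∑ j, (α i + p i j * β j) * g i j :=
        sum_le_sum fun i _ => sum_le_sum fun j _ =>
          mul_le_mul_of_nonneg_right (by linarith [hdual i j]) (hg i j)
    _ = ∑ i, α i * ∑ j, g i j + ∑ j, β j * ∑ i, p i j * g i j :=
        (sum_dual_mul_loads p g α β).symm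
    _ ≤ ∑ i, α i * a i + ∑ j, β j * b j :=
        add_le_add (sum_le_sum fun i _ => mul_le_mul_of_nonneg_left (hgcap i) (hα i))
          (sum_le_sum fun j _ => mul_le_mul_of_nonneg_left (hgbud j) (hβ j))

theorem mul_eq_mul_of_slack {x y μ : ℝ} (hxy : x ≤ y) (hslack : x < y → μ = 0) :
    μ * y = μ * x := by
  rcases hxy.lt_or_eq with h | h
  · simp [hslack h]
  · rw [h]

theorem dual_objective_le_cost (a : S → ℝ) (b : T → ℝ) (p c f : S → T → ℝ)
    (α : S → ℝ) (β : T → ℝ) (ε : ℝ)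
    (hf : ∀ i j, 0 ≤ f i j)
    (hcap : ∀ i, ∑ j, f i j ≤ a i)
    (hbud : ∀ j, ∑ i, p i j * f i j ≤ b j)
    (hcs1 : ∀ i j, 0 < f i j → α i ≤ c i j - p i j * β j + ε * c i j)
    (hcs2 : ∀ i, ∑ j, f i j < a i → α i = 0)
    (hcs3 : ∀ j, ∑ i, p i j * f i j < b j → β j = 0) :
    ∑ i, α i * a i + ∑ j, β j * b j ≤ (1 + ε) * ∑ i, ∑ j, c i j * f i j := by
  have hedge : ∀ i j, (α i + p i j * β j) * f i j ≤ (1 + ε) * (c i j * f i j) := by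
    intro i j
    rcases (hf i j).lt_or_eq with hpos | hzero
    · nlinarith [hcs1 i j hpos]
    · simp [← hzero]
  calc ∑ i, α i * a i + ∑ j, β j * b j
      = ∑ i, α i * ∑ j, f i j + ∑ j, β j * ∑ i, p i j * f i j := by
        simp only [fun i => mul_eq_mul_of_slack (hcap i) (hcs2 i),
          fun j => mul_eq_mul_of_slack (hbud j) (hcs3 j)]
    _ = ∑ i, ∑ j, (α i + p i j * β j) * f i j := sum_dual_mul_loads p f α β
    _ ≤ (1 + ε) * ∑ i, ∑ j, c i j * f i j := by
        simp only [mul_sum]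
        exact sum_le_sum fun i _ => sum_le_sum fun j _ => hedge i j

end BudgetedTransportation

theorem one_sub_mul_le_of_le_one_add_mul {F G ε : ℝ} (hF : 0 ≤ F) (hG : 0 ≤ G)
    (h : G ≤ (1 + ε) * F) : (1 - ε) * G ≤ F := by
  rcases le_or_gt ε 1 with hε | hε
  · nlinarith [mul_le_mul_of_nonneg_left h (sub_nonneg.mpr hε), sq_nonneg ε]
  · nlinarith

theorem budgeted_transportation_approx_optimality_general
    {S T : Type*} [Fintype S] [Fintype T]
    (a : S → ℝ) (b : T → ℝ) (p c f g : S → T → ℝ) (α : S → ℝ) (β : T → ℝ) (ε : ℝ)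
    (hc : ∀ i j, 0 ≤ c i j)
    -- f is a feasible flow
    (hf : ∀ i j, 0 ≤ f i j)
    (hcap : ∀ i, ∑ j, f i j ≤ a i)
    (hbud : ∀ j, ∑ i, p i j * f i j ≤ b j)
    -- (α, β) is a feasible dual
    (hα : ∀ i, 0 ≤ α i) (hβ : ∀ j, 0 ≤ β j)
    (hdual : ∀ i j, c i j - p i j * β j ≤ α i)
    -- approximate complementary slackness
    (hcs1 : ∀ i j, 0 < f i j → α i ≤ c i j - p i j * β j + ε * c i j)
    (hcs2 : ∀ i, ∑ j, f i j < a i → α i = 0)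
    (hcs3 : ∀ j, ∑ i, p i j * f i j < b j → β j = 0)
    -- g is any feasible flow
    (hg : ∀ i j, 0 ≤ g i j)
    (hgcap : ∀ i, ∑ j, g i j ≤ a i)
    (hgbud : ∀ j, ∑ i, p i j * g i j ≤ b j) :
    ∑ i, ∑ j, c i j * f i j ≥ (1 - ε) * ∑ i, ∑ j, c i j * g i j := by
  have hcost_nonneg : ∀ x : S → T → ℝ, (∀ i j, 0 ≤ x i j) → 0 ≤ ∑ i, ∑ j, c i j * x i j :=
    fun x hx => sum_nonneg fun i _ => sum_nonneg fun j _ => mul_nonneg (hc i j) (hx i j)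
  refine one_sub_mul_le_of_le_one_add_mul (hcost_nonneg f hf) (hcost_nonneg g hg) ?_
  exact (BudgetedTransportation.cost_le_dual_objective a b p c g α β hg hgcap hgbud hα hβ hdual).trans
    (BudgetedTransportation.dual_objective_le_cost a b p c f α β ε hf hcap hbud hcs1 hcs2 hcs3)

/-- Approximate optimality from approximate complementary slackness
for the budgeted transportation LP. -/
theorem budgeted_transportation_approx_optimality
    {S T : Type*} [Fintype S] [Fintype T]
    (a : S → ℝ) (b : T → ℝ) (p c f g : S → T → ℝ) (α : S → ℝ) (β : T → ℝ) (ε : ℝ)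
    (hε : 0 ≤ ε)
    (ha : ∀ i, 0 ≤ a i) (hb : ∀ j, 0 ≤ b j)
    (hp : ∀ i j, 0 < p i j) (hc : ∀ i j, 0 ≤ c i j)
    -- f is a feasible flow
    (hf : ∀ i j, 0 ≤ f i j)
    (hcap : ∀ i, ∑ j, f i j ≤ a i)
    (hbud : ∀ j, ∑ i, p i j * f i j ≤ b j)
    -- (α, β) is a feasible dual
    (hα : ∀ i, 0 ≤ α i) (hβ : ∀ j, 0 ≤ β j)
    (hdual : ∀ i j, c i j - p i j * β j ≤ α i)
    -- approximate complementary slackness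
    (hcs1 : ∀ i j, 0 < f i j → α i ≤ c i j - p i j * β j + ε * c i j)
    (hcs2 : ∀ i, ∑ j, f i j < a i → α i = 0)
    (hcs3 : ∀ j, ∑ i, p i j * f i j < b j → β j = 0)
    -- g is any feasible flow
    (hg : ∀ i j, 0 ≤ g i j)
    (hgcap : ∀ i, ∑ j, g i j ≤ a i)
    (hgbud : ∀ j, ∑ i, p i j * g i j ≤ b j) :
    ∑ i, ∑ j, c i j * f i j ≥ (1 - ε) * ∑ i, ∑ j, c i j * g i j :=
  budgeted_transportation_approx_optimality_general a b p c f g α β ε hc hf hcap hbud hα hβ hdual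
    hcs1 hcs2 hcs3 hg hgcap hgbud
end

section
/- If for all edges ij with f_{ij} > 0 we have α_i ≤ c_{ij} − p_{ij} β_j + ε c_{ij}, and dual feasibility α_i ≥ c_{ij} − p_{ij} β_j holds with f ≥ 0 and c ≥ 0, then |∑_{ij} f_{ij}(c_{ij} − α_i − p_{ij} β_j)| ≤ ε ∑_{ij} c_{ij} f_{ij}. -/
open Finset

lemma abs_mul_reduced_cost_le {f c a b ε : ℝ} (hf : 0 ≤ f) (hdual : c - b ≤ a)
    (hcs : 0 < f → a ≤ c - b + ε * c) :
    |f * (c - a - b)| ≤ ε * (c * f) := by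
  rcases hf.eq_or_lt with rfl | hpos
  · simp
  have hslack : -(c - a - b) ≤ ε * c := by linarith [hcs hpos]
  calc |f * (c - a - b)| = f * -(c - a - b) := by
        rw [abs_mul, abs_of_pos hpos, abs_of_nonpos (by linarith)]
    _ ≤ f * (ε * c) := mul_le_mul_of_nonneg_left hslack hf
    _ = ε * (c * f) := by ring

theorem budgeted_transportation_cs_defect_bound_general
    {S T : Type*} [Fintype S] [Fintype T]
    (p c f : S → T → ℝ) (α : S → ℝ) (β : T → ℝ) (ε : ℝ)
    (hf : ∀ i j, 0 ≤ f i j)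
    (hdual : ∀ i j, c i j - p i j * β j ≤ α i)
    (hcs : ∀ i j, 0 < f i j → α i ≤ c i j - p i j * β j + ε * c i j) :
    |∑ i, ∑ j, f i j * (c i j - α i - p i j * β j)| ≤ ε * ∑ i, ∑ j, c i j * f i j := by
  calc |∑ i, ∑ j, f i j * (c i j - α i - p i j * β j)|
      ≤ ∑ i, ∑ j, |f i j * (c i j - α i - p i j * β j)| :=
        (abs_sum_le_sum_abs _ _).trans (sum_le_sum fun i _ => abs_sum_le_sum_abs _ _)
    _ ≤ ∑ i, ∑ j, ε * (c i j * f i j) := sum_le_sum fun i _ => sum_le_sum fun j _ =>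
        abs_mul_reduced_cost_le (hf i j) (hdual i j) (hcs i j)
    _ = ε * ∑ i, ∑ j, c i j * f i j := by simp_rw [mul_sum]

/-- Bound on the complementary-slackness defect term. -/
theorem budgeted_transportation_cs_defect_bound
    {S T : Type*} [Fintype S] [Fintype T]
    (p c f : S → T → ℝ) (α : S → ℝ) (β : T → ℝ) (ε : ℝ)
    (hε : 0 ≤ ε)
    (hf : ∀ i j, 0 ≤ f i j) (hc : ∀ i j, 0 ≤ c i j)
    (hdual : ∀ i j, c i j - p i j * β j ≤ α i)
    (hcs : ∀ i j, 0 < f i j → α i ≤ c i j - p i j * β j + ε * c i j) :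
    |∑ i, ∑ j, f i j * (c i j - α i - p i j * β j)| ≤ ε * ∑ i, ∑ j, c i j * f i j :=
  budgeted_transportation_cs_defect_bound_general p c f α β ε hf hdual hcs
end

section
/- Approximate optimality for the capacitated problem: let f be feasible and (α, β, γ) dual-feasible for the capacitated budgeted transshipment LP, ε ≥ 0. If (i) f_{ij} > 0 implies |c_{ij} − α_i − p_{ij}β_j − γ_{ij}| ≤ ε c_{ij}, (ii) α_i > 0 implies ∑_j f_{ij} = a_i, (iii) β_j > 0 implies ∑_i p_{ij} f_{ij} = b_j, (iv) γ_{ij} > 0 implies f_{ij} = u_{ij}, then for any feasible flow g, ∑_{ij} c_{ij} f_{ij} ≥ (1 − ε) ∑_{ij} c_{ij} g_{ij}. -/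
/-!
Weak LP duality bounds the cost of every feasible flow `g` by the dual objective
`D = ∑ α a + ∑ β b + ∑ γ u`. Exact complementary slackness (ii)–(iv) turns `D` into the cost
of `f` under the dual prices `α i + p i j β j + γ i j`, and the approximate slackness (i) bounds
these prices by `(1 + ε) c i j` on the support of `f`. Hence `(1 - ε) ∑ c g ≤ (1 - ε²) ∑ c f ≤ ∑ c f`.
-/

open Finset

theorem mul_eq_mul_left_of_pos_imp {M₀ : Type*} [MulZeroClass M₀] [PartialOrder M₀]
    {x y z : M₀} (hx : 0 ≤ x) (h : 0 < x → y = z) : x * y = x * z := by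
  rcases hx.eq_or_lt with rfl | hpos
  · simp only [zero_mul]
  · rw [h hpos]

namespace BudgetedTransshipment

variable {R S T : Type*} [CommRing R] [Fintype S] [Fintype T]

def dualPrice (p γ : S → T → R) (α : S → R) (β : T → R) (i : S) (j : T) : R :=
  α i + p i j * β j + γ i j

def dualObjective (a : S → R) (b : T → R) (u : S → T → R) (α : S → R) (β : T → R)
    (γ : S → T → R) : R :=
  ∑ i, α i * a i + ∑ j, β j * b j + ∑ i, ∑ j, γ i j * u i j

theorem sum_dualPrice_mul (p γ h : S → T → R) (α : S → R) (β : T → R) :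
    ∑ i, ∑ j, dualPrice p γ α β i j * h i j
      = ∑ i, α i * ∑ j, h i j + ∑ j, β j * ∑ i, p i j * h i j + ∑ i, ∑ j, γ i j * h i j := by
  have hβ : ∑ i, ∑ j, p i j * β j * h i j = ∑ j, β j * ∑ i, p i j * h i j := by
    rw [sum_comm]
    refine sum_congr rfl fun j _ => ?_
    rw [mul_sum]
    exact sum_congr rfl fun i _ => by ring
  simp only [dualPrice, add_mul, sum_add_distrib, mul_sum, hβ]

theorem dualObjective_eq_sum_dualPrice_mul [PartialOrder R] {a : S → R} {b : T → R}
    {u p f γ : S → T → R} {α : S → R} {β : T → R}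
    (hα : ∀ i, 0 ≤ α i) (hβ : ∀ j, 0 ≤ β j) (hγ : ∀ i j, 0 ≤ γ i j)
    (hcs2 : ∀ i, 0 < α i → ∑ j, f i j = a i)
    (hcs3 : ∀ j, 0 < β j → ∑ i, p i j * f i j = b j)
    (hcs4 : ∀ i j, 0 < γ i j → f i j = u i j) :
    dualObjective a b u α β γ = ∑ i, ∑ j, dualPrice p γ α β i j * f i j := by
  rw [sum_dualPrice_mul, dualObjective]
  congr 1
  · congr 1
    · exact sum_congr rfl fun i _ => mul_eq_mul_left_of_pos_imp (hα i) fun h => (hcs2 i h).symm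
    · exact sum_congr rfl fun j _ => mul_eq_mul_left_of_pos_imp (hβ j) fun h => (hcs3 j h).symm
  · exact sum_congr rfl fun i _ => sum_congr rfl fun j _ =>
      mul_eq_mul_left_of_pos_imp (hγ i j) fun h => (hcs4 i j h).symm

variable [LinearOrder R] [IsStrictOrderedRing R]

theorem sum_mul_le_dualObjective {a : S → R} {b : T → R} {u p c g γ : S → T → R} {α : S → R}
    {β : T → R} (hα : ∀ i, 0 ≤ α i) (hβ : ∀ j, 0 ≤ β j) (hγ : ∀ i j, 0 ≤ γ i j)
    (hdual : ∀ i j, c i j - p i j * β j - γ i j ≤ α i) (hg : ∀ i j, 0 ≤ g i j)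
    (hgcap : ∀ i, ∑ j, g i j ≤ a i) (hgbud : ∀ j, ∑ i, p i j * g i j ≤ b j)
    (hgedge : ∀ i j, g i j ≤ u i j) :
    ∑ i, ∑ j, c i j * g i j ≤ dualObjective a b u α β γ := by
  have hprice : ∀ i j, c i j ≤ dualPrice p γ α β i j := fun i j => by
    unfold dualPrice; linarith [hdual i j]
  calc ∑ i, ∑ j, c i j * g i j
      ≤ ∑ i, ∑ j, dualPrice p γ α β i j * g i j :=
        sum_le_sum fun i _ => sum_le_sum fun j _ =>
          mul_le_mul_of_nonneg_right (hprice i j) (hg i j)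
    _ = ∑ i, α i * ∑ j, g i j + ∑ j, β j * ∑ i, p i j * g i j + ∑ i, ∑ j, γ i j * g i j :=
        sum_dualPrice_mul p γ g α β
    _ ≤ dualObjective a b u α β γ :=
        add_le_add (add_le_add
          (sum_le_sum fun i _ => mul_le_mul_of_nonneg_left (hgcap i) (hα i))
          (sum_le_sum fun j _ => mul_le_mul_of_nonneg_left (hgbud j) (hβ j)))
          (sum_le_sum fun i _ => sum_le_sum fun j _ =>
            mul_le_mul_of_nonneg_left (hgedge i j) (hγ i j))

theorem sum_dualPrice_mul_le {p c f γ : S → T → R} {α : S → R} {β : T → R} {ε : R}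
    (hf : ∀ i j, 0 ≤ f i j)
    (hcs1 : ∀ i j, 0 < f i j → |c i j - α i - p i j * β j - γ i j| ≤ ε * c i j) :
    ∑ i, ∑ j, dualPrice p γ α β i j * f i j ≤ (1 + ε) * ∑ i, ∑ j, c i j * f i j := by
  simp only [mul_sum, ← mul_assoc]
  refine sum_le_sum fun i _ => sum_le_sum fun j _ => ?_
  rcases (hf i j).eq_or_lt with hzero | hpos
  · simp only [← hzero, mul_zero, le_refl]
  · have hprice : dualPrice p γ α β i j ≤ (1 + ε) * c i j := by
      unfold dualPrice; linarith [(abs_le.mp (hcs1 i j hpos)).1]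
    exact mul_le_mul_of_nonneg_right hprice hpos.le

theorem one_sub_mul_le_of_le_one_add_mul {x y ε : R} (hx : 0 ≤ x) (hy : 0 ≤ y)
    (h : x ≤ (1 + ε) * y) : (1 - ε) * x ≤ y := by
  rcases le_or_gt ε 1 with hε | hε
  · calc (1 - ε) * x ≤ (1 - ε) * ((1 + ε) * y) := mul_le_mul_of_nonneg_left h (by linarith)
      _ = y - ε ^ 2 * y := by ring
      _ ≤ y := sub_le_self _ (mul_nonneg (sq_nonneg ε) hy)
  · exact (mul_nonpos_of_nonpos_of_nonneg (by linarith) hx).trans hy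

end BudgetedTransshipment

open BudgetedTransshipment in
theorem budgeted_transshipment_approx_optimality_general
    {S T : Type*} [Fintype S] [Fintype T]
    (a : S → ℝ) (b : T → ℝ) (u p c f g γ : S → T → ℝ) (α : S → ℝ) (β : T → ℝ) (ε : ℝ)
    (hc : ∀ i j, 0 ≤ c i j)
    -- f is feasible
    (hf : ∀ i j, 0 ≤ f i j)
    -- (α, β, γ) is dual-feasible
    (hα : ∀ i, 0 ≤ α i) (hβ : ∀ j, 0 ≤ β j) (hγ : ∀ i j, 0 ≤ γ i j)
    (hdual : ∀ i j, c i j - p i j * β j - γ i j ≤ α i)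
    -- approximate complementary slackness
    (hcs1 : ∀ i j, 0 < f i j → |c i j - α i - p i j * β j - γ i j| ≤ ε * c i j)
    (hcs2 : ∀ i, 0 < α i → ∑ j, f i j = a i)
    (hcs3 : ∀ j, 0 < β j → ∑ i, p i j * f i j = b j)
    (hcs4 : ∀ i j, 0 < γ i j → f i j = u i j)
    -- g is any feasible flow
    (hg : ∀ i j, 0 ≤ g i j)
    (hgcap : ∀ i, ∑ j, g i j ≤ a i)
    (hgbud : ∀ j, ∑ i, p i j * g i j ≤ b j)
    (hgedge : ∀ i j, g i j ≤ u i j) :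
    ∑ i, ∑ j, c i j * f i j ≥ (1 - ε) * ∑ i, ∑ j, c i j * g i j := by
  have hweak := sum_mul_le_dualObjective hα hβ hγ hdual hg hgcap hgbud hgedge
  have hslack := dualObjective_eq_sum_dualPrice_mul (p := p) (f := f) hα hβ hγ hcs2 hcs3 hcs4
  have hprice := sum_dualPrice_mul_le (γ := γ) hf hcs1
  have hcost : ∀ h : S → T → ℝ, (∀ i j, 0 ≤ h i j) → 0 ≤ ∑ i, ∑ j, c i j * h i j :=
    fun h hh => sum_nonneg fun i _ => sum_nonneg fun j _ => mul_nonneg (hc i j) (hh i j)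
  exact one_sub_mul_le_of_le_one_add_mul (hcost g hg) (hcost f hf)
    (hweak.trans (hslack.trans_le hprice))

/-- Approximate optimality for the capacitated budgeted transshipment LP. -/
theorem budgeted_transshipment_approx_optimality
    {S T : Type*} [Fintype S] [Fintype T]
    (a : S → ℝ) (b : T → ℝ) (u p c f g γ : S → T → ℝ) (α : S → ℝ) (β : T → ℝ) (ε : ℝ)
    (hε : 0 ≤ ε)
    (ha : ∀ i, 0 ≤ a i) (hb : ∀ j, 0 ≤ b j) (hu : ∀ i j, 0 ≤ u i j)
    (hp : ∀ i j, 0 < p i j) (hc : ∀ i j, 0 ≤ c i j)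
    -- f is feasible
    (hf : ∀ i j, 0 ≤ f i j)
    (hcap : ∀ i, ∑ j, f i j ≤ a i)
    (hbud : ∀ j, ∑ i, p i j * f i j ≤ b j)
    (hedge : ∀ i j, f i j ≤ u i j)
    -- (α, β, γ) is dual-feasible
    (hα : ∀ i, 0 ≤ α i) (hβ : ∀ j, 0 ≤ β j) (hγ : ∀ i j, 0 ≤ γ i j)
    (hdual : ∀ i j, c i j - p i j * β j - γ i j ≤ α i)
    -- approximate complementary slackness
    (hcs1 : ∀ i j, 0 < f i j → |c i j - α i - p i j * β j - γ i j| ≤ ε * c i j)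
    (hcs2 : ∀ i, 0 < α i → ∑ j, f i j = a i)
    (hcs3 : ∀ j, 0 < β j → ∑ i, p i j * f i j = b j)
    (hcs4 : ∀ i j, 0 < γ i j → f i j = u i j)
    -- g is any feasible flow
    (hg : ∀ i j, 0 ≤ g i j)
    (hgcap : ∀ i, ∑ j, g i j ≤ a i)
    (hgbud : ∀ j, ∑ i, p i j * g i j ≤ b j)
    (hgedge : ∀ i j, g i j ≤ u i j) :
    ∑ i, ∑ j, c i j * f i j ≥ (1 - ε) * ∑ i, ∑ j, c i j * g i j :=
  budgeted_transshipment_approx_optimality_general a b u p c f g γ α β ε hc hf hα hβ hγ hdual hcs1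
    hcs2 hcs3 hcs4 hg hgcap hgbud hgedge
end
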